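/- Consider the scalar system x_{t+1} = x_t + a x_t³ + d_t with a > 0. For two solutions with the same input sequence d and distinct initial conditions ξ₁ ≠ ξ₂, the squared difference V_t = (x(t,ξ₁,d) - x(t,ξ₂,d))² is strictly increasing in t; in particular the difference of the two trajectories never converges to zero. -/
import Mathlib


open Filter

/-- Solution of the scalar recursion `x_{t+1} = x_t + a x_t³ + d_t`. -/
noncomputable def cubicTraj (a : ℝ) (d : ℕ → ℝ) (ξ : ℝ) : ℕ → ℝ
  | 0 => ξ
  | t + 1 => cubicTraj a d ξ t + a * (cubicTraj a d ξ t) ^ 3 + d t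

lemma cubic_quad_pos {x y : ℝ} (h : x ≠ y) : 0 < x ^ 2 + x * y + y ^ 2 := by
  rcases eq_or_ne y 0 with rfl | hy
  · have hx : x ≠ 0 := by simpa using h
    nlinarith [pow_pos (abs_pos.mpr hx) 2, sq_abs x]
  · nlinarith [sq_nonneg (2 * x + y), pow_pos (abs_pos.mpr hy) 2, sq_abs y]

/-- for `x_{t+1} = x_t + a x_t³ + d_t` with `a > 0` and distinct
initial conditions, the squared trajectory difference
`V_t = (x(t,ξ₁,d) - x(t,ξ₂,d))²` is strictly increasing; in particular the
difference of the trajectories never converges to zero. -/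
theorem cubic_system_incrementally_unstable
    (a : ℝ) (ha : 0 < a) (d : ℕ → ℝ) (ξ₁ ξ₂ : ℝ) (hne : ξ₁ ≠ ξ₂) :
    StrictMono (fun t : ℕ => (cubicTraj a d ξ₁ t - cubicTraj a d ξ₂ t) ^ 2) ∧
    ¬ Tendsto (fun t : ℕ => cubicTraj a d ξ₁ t - cubicTraj a d ξ₂ t)
        atTop (nhds 0) := by
  set x := cubicTraj a d ξ₁
  set y := cubicTraj a d ξ₂
  have hstep : ∀ t, x t ≠ y t → (x t - y t) ^ 2 < (x (t + 1) - y (t + 1)) ^ 2 ∧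
      x (t + 1) ≠ y (t + 1) := by
    intro t h
    have hq := cubic_quad_pos h
    have hΔ : x (t + 1) - y (t + 1)
        = (x t - y t) * (1 + a * (x t ^ 2 + x t * y t + y t ^ 2)) := by
      show (x t + a * x t ^ 3 + d t) - (y t + a * y t ^ 3 + d t) = _
      ring
    have hd : x t - y t ≠ 0 := sub_ne_zero.mpr h
    have hfac : 1 < 1 + a * (x t ^ 2 + x t * y t + y t ^ 2) := by nlinarith
    constructor
    · rw [hΔ, mul_pow]
      have h2 : 0 < (x t - y t) ^ 2 := by positivity
      have hf2 : 1 < (1 + a * (x t ^ 2 + x t * y t + y t ^ 2)) ^ 2 := by nlinarith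
      calc (x t - y t) ^ 2 = (x t - y t) ^ 2 * 1 := by ring
        _ < (x t - y t) ^ 2 * (1 + a * (x t ^ 2 + x t * y t + y t ^ 2)) ^ 2 :=
          (mul_lt_mul_iff_right₀ h2).mpr hf2
    · rw [← sub_ne_zero, hΔ]
      exact mul_ne_zero hd (by linarith)
  have hne' : ∀ t, x t ≠ y t := by
    intro t
    induction t with
    | zero => exact hne
    | succ n ih => exact (hstep n ih).2
  have hmono : StrictMono (fun t : ℕ => (x t - y t) ^ 2) :=
    strictMono_nat_of_lt_succ fun n => (hstep n (hne' n)).1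
  refine ⟨hmono, fun htend => ?_⟩
  have h0 : (0:ℝ) < (x 0 - y 0) ^ 2 := by
    have := sub_ne_zero.mpr hne
    positivity
  have htend2 : Tendsto (fun t : ℕ => (x t - y t) ^ 2) atTop (nhds 0) := by
    simpa using (htend.pow 2)
  have : ∀ᶠ t in atTop, (x t - y t) ^ 2 < (x 0 - y 0) ^ 2 :=
    htend2.eventually_lt_const h0
  obtain ⟨t, ht⟩ := this.exists
  exact absurd (hmono.monotone (Nat.zero_le t)) (not_le.mpr ht)
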